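/- arXiv:1510.02561 — 9 statements merged into one kernel-verified Lean document; each statement's English description precedes it below -/
import Mathlib

section
/- Let ψ_XOR be the 3-qubit state defined by ψ_XOR s = 1/2 if s 2 = s 0 + s 1 (identifying Fin 2 with ZMod 2) and ψ_XOR s = 0 otherwise. In the measurement scenario in which each of the three parties may choose between the Pauli observables Y and Z, the empirical model of ψ_XOR is strongly contextual: no global assignment g : (i : Fin 3) → {Y, Z} → Bool is consistent. -/
open Complex Finset

/-- A local observable: a pair of vectors forming an orthonormal basis of ℂ². -/
structure Obs where
  eplus : Fin 2 → ℂ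
  eminus : Fin 2 → ℂ
  norm_plus : ∑ a : Fin 2, ‖eplus a‖ ^ 2 = 1
  norm_minus : ∑ a : Fin 2, ‖eminus a‖ ^ 2 = 1
  orth : ∑ a : Fin 2, (starRingEnd ℂ) (eplus a) * eminus a = 0

/-- Probability that context `c` yields joint outcome `o` on state `ψ`. -/
noncomputable def jointProb {n : ℕ} (ψ : (Fin n → Fin 2) → ℂ) (c : Fin n → Obs)
    (o : Fin n → Bool) : ℝ :=
  ‖∑ s : Fin n → Fin 2,
      (∏ i : Fin n,
        (starRingEnd ℂ) ((if o i then (c i).eplus else (c i).eminus) (s i))) * ψ s‖ ^ 2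

/-- A global assignment `g` is consistent if in every context of the scenario `M`
the induced joint outcome is possible. -/
def Consistent {n : ℕ} (ψ : (Fin n → Fin 2) → ℂ) (M : Fin n → Set Obs)
    (g : Fin n → Obs → Bool) : Prop :=
  ∀ c : Fin n → Obs, (∀ i, c i ∈ M i) → jointProb ψ c (fun i => g i (c i)) ≠ 0

def StronglyContextual {n : ℕ} (ψ : (Fin n → Fin 2) → ℂ) (M : Fin n → Set Obs) : Prop :=
  ¬ ∃ g : Fin n → Obs → Bool, Consistent ψ M g

def LogicallyContextual {n : ℕ} (ψ : (Fin n → Fin 2) → ℂ) (M : Fin n → Set Obs) : Prop :=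
  ∃ c : Fin n → Obs, (∀ i, c i ∈ M i) ∧ ∃ o : Fin n → Bool,
    jointProb ψ c o ≠ 0 ∧
    ¬ ∃ g : Fin n → Obs → Bool, Consistent ψ M g ∧ ∀ i, g i (c i) = o i

/-- The Pauli Z observable. -/
noncomputable def pauliZ : Obs where
  eplus := ![1, 0]
  eminus := ![0, 1]
  norm_plus := by simp [Fin.sum_univ_two]
  norm_minus := by simp [Fin.sum_univ_two]
  orth := by simp [Fin.sum_univ_two]

/-- The Pauli Y observable. -/
noncomputable def pauliY : Obs where
  eplus := ![((Real.sqrt 2)⁻¹ : ℝ), ((Real.sqrt 2)⁻¹ : ℝ) * Complex.I]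
  eminus := ![((Real.sqrt 2)⁻¹ : ℝ), -(((Real.sqrt 2)⁻¹ : ℝ) * Complex.I)]
  norm_plus := by
    have h : ‖(((Real.sqrt 2)⁻¹ : ℝ) : ℂ)‖ ^ 2 = 1 / 2 := by
      rw [Complex.norm_real, Real.norm_eq_abs, _root_.sq_abs, inv_pow,
        Real.sq_sqrt (by norm_num : (0:ℝ) ≤ 2)]
      norm_num
    simp [Fin.sum_univ_two, norm_mul, h]
    norm_num [h]
  norm_minus := by
    have h : ‖(((Real.sqrt 2)⁻¹ : ℝ) : ℂ)‖ ^ 2 = 1 / 2 := by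
      rw [Complex.norm_real, Real.norm_eq_abs, _root_.sq_abs, inv_pow,
        Real.sq_sqrt (by norm_num : (0:ℝ) ≤ 2)]
      norm_num
    simp [Fin.sum_univ_two, norm_mul, h]
    norm_num [h]
  orth := by
    have h : ((starRingEnd ℂ) (((Real.sqrt 2)⁻¹ : ℝ) : ℂ)) = (((Real.sqrt 2)⁻¹ : ℝ) : ℂ) :=
      Complex.conj_ofReal _
    simp [Fin.sum_univ_two, map_mul, Complex.conj_I, h]
    linear_combination (((Real.sqrt 2 : ℝ) : ℂ))⁻¹ * (((Real.sqrt 2 : ℝ) : ℂ))⁻¹ * Complex.I_mul_I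

/-- The Pauli X observable. -/
noncomputable def pauliX : Obs where
  eplus := ![((Real.sqrt 2)⁻¹ : ℝ), ((Real.sqrt 2)⁻¹ : ℝ)]
  eminus := ![((Real.sqrt 2)⁻¹ : ℝ), -(((Real.sqrt 2)⁻¹ : ℝ) : ℂ)]
  norm_plus := by
    have h : ‖(((Real.sqrt 2)⁻¹ : ℝ) : ℂ)‖ ^ 2 = 1 / 2 := by
      rw [Complex.norm_real, Real.norm_eq_abs, _root_.sq_abs, inv_pow,
        Real.sq_sqrt (by norm_num : (0:ℝ) ≤ 2)]
      norm_num
    simp [Fin.sum_univ_two, h]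
    norm_num [h]
  norm_minus := by
    have h : ‖(((Real.sqrt 2)⁻¹ : ℝ) : ℂ)‖ ^ 2 = 1 / 2 := by
      rw [Complex.norm_real, Real.norm_eq_abs, _root_.sq_abs, inv_pow,
        Real.sq_sqrt (by norm_num : (0:ℝ) ≤ 2)]
      norm_num
    simp [Fin.sum_univ_two, h]
    norm_num [h]
  orth := by
    have h : ((starRingEnd ℂ) (((Real.sqrt 2)⁻¹ : ℝ) : ℂ)) = (((Real.sqrt 2)⁻¹ : ℝ) : ℂ) :=
      Complex.conj_ofReal _
    simp [Fin.sum_univ_two, h]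

/-- The XOR state: `ψ s = 1/2` when `s 2 = s 0 + s 1` in `ZMod 2`, else `0`. -/
noncomputable def psiXOR : (Fin 3 → Fin 2) → ℂ := fun s =>
  if ((s 2 : ℕ) : ZMod 2) = ((s 0 : ℕ) : ZMod 2) + ((s 1 : ℕ) : ZMod 2)
  then (1 / 2 : ℂ) else 0

/-!
In the context `ZZZ` only outcomes with `o 0 ^^ o 1 ^^ o 2 = true` are possible for `psiXOR`,
in each of the contexts `YYZ`, `YZY`, `ZYY` only outcomes with `o 0 ^^ o 1 ^^ o 2 = false`
(the state is a `±1` eigenvector of these Pauli products). A global assignment feeds each of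
its six values `g i pauliY`, `g i pauliZ` into exactly two of these four contexts, so the xor
of the four parities is `false`, while the constraints make it `true` (Mermin's argument).
-/

theorem Fin.sum_univ_pi_three {α M : Type*} [Fintype α] [AddCommMonoid M]
    (f : (Fin 3 → α) → M) : ∑ s, f s = ∑ a, ∑ b, ∑ c, f ![a, b, c] := by
  simp only [← (Fin.consEquiv fun _ => α).sum_comp, Fintype.sum_prod_type, Fintype.sum_unique]
  rfl

theorem jointProb_fin_three (ψ : (Fin 3 → Fin 2) → ℂ) (c : Fin 3 → Obs) (o : Fin 3 → Bool) :
    jointProb ψ c o = ‖∑ a, ∑ b, ∑ d,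
      (starRingEnd ℂ) ((if o 0 then (c 0).eplus else (c 0).eminus) a) *
      (starRingEnd ℂ) ((if o 1 then (c 1).eplus else (c 1).eminus) b) *
      (starRingEnd ℂ) ((if o 2 then (c 2).eplus else (c 2).eminus) d) * ψ ![a, b, d]‖ ^ 2 := by
  simp [jointProb, Fin.sum_univ_pi_three, Fin.prod_univ_three]

theorem psiXOR_apply (a b d : Fin 2) : psiXOR ![a, b, d] = if d = a + b then 1 / 2 else 0 := by
  fin_cases a <;> fin_cases b <;> fin_cases d <;> simp +decide [psiXOR]

theorem jointProb_psiXOR_ZZZ_eq_zero (o : Fin 3 → Bool) (h : (o 0 ^^ o 1 ^^ o 2) = false) :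
    jointProb psiXOR ![pauliZ, pauliZ, pauliZ] o = 0 := by
  rw [jointProb_fin_three]
  generalize o 0 = a, o 1 = b, o 2 = d at h
  cases a <;> cases b <;> cases d <;> simp at h
  all_goals simp [Fin.sum_univ_two, psiXOR_apply, pauliZ]

theorem jointProb_psiXOR_eq_zero_of_two_pauliY {c : Fin 3 → Obs}
    (hc : c = ![pauliY, pauliY, pauliZ] ∨ c = ![pauliY, pauliZ, pauliY] ∨
      c = ![pauliZ, pauliY, pauliY])
    (o : Fin 3 → Bool) (h : (o 0 ^^ o 1 ^^ o 2) = true) : jointProb psiXOR c o = 0 := by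
  rw [jointProb_fin_three]
  generalize o 0 = a, o 1 = b, o 2 = d at h
  rcases hc with rfl | rfl | rfl <;> cases a <;> cases b <;> cases d <;> simp at h
  all_goals simp [Fin.sum_univ_two, psiXOR_apply, pauliY, pauliZ]
  all_goals ring_nf
  all_goals simp [I_sq]

theorem mermin_parity (y z : Fin 3 → Bool) :
    ((z 0 ^^ z 1 ^^ z 2) ^^ (y 0 ^^ y 1 ^^ z 2) ^^ (y 0 ^^ z 1 ^^ y 2) ^^ (z 0 ^^ y 1 ^^ y 2))
      = false := by
  simp only [Bool.xor_assoc, Bool.xor_left_comm, Bool.xor_self, Bool.xor_false]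

/-- The XOR state is strongly contextual for the scenario where each of the three
parties chooses between the Pauli observables Y and Z. -/
theorem psiXOR_stronglyContextual :
    StronglyContextual psiXOR (fun _ : Fin 3 => ({pauliY, pauliZ} : Set Obs)) := by
  rintro ⟨g, hg⟩
  have hZZZ := mt (jointProb_psiXOR_ZZZ_eq_zero _) (hg _ (by simp [Fin.forall_fin_succ]))
  have hYYZ := mt (jointProb_psiXOR_eq_zero_of_two_pauliY (.inl rfl) _)
    (hg _ (by simp [Fin.forall_fin_succ]))
  have hYZY := mt (jointProb_psiXOR_eq_zero_of_two_pauliY (.inr (.inl rfl)) _)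
    (hg _ (by simp [Fin.forall_fin_succ]))
  have hZYY := mt (jointProb_psiXOR_eq_zero_of_two_pauliY (.inr (.inr rfl)) _)
    (hg _ (by simp [Fin.forall_fin_succ]))
  simp only [Matrix.cons_val_zero, Matrix.cons_val_one, Matrix.cons_val_two, Matrix.tail_cons,
    Matrix.head_cons, Bool.not_eq_false, Bool.not_eq_true] at hZZZ hYYZ hYZY hZYY
  have parity := mermin_parity (g · pauliY) (g · pauliZ)
  beta_reduce at parity
  rw [hZZZ, hYYZ, hYZY, hZYY] at parity
  exact absurd parity (by decide)
end

section
/- Let n ≥ 2 and F : (Fin n → ZMod 2) → ZMod 2. Suppose there exist indices i ≠ j in Fin n and a function G : (Fin n → ZMod 2) → ZMod 2 satisfying G q = G q' whenever q and q' agree at all coordinates outside {i, j}, such that F q = q i + q j + G q for all q. Let ψ_F be the (n+1)-qubit balanced state with functional dependency F: ψ_F s = 2^(−n/2) if s n equals F applied to the first n coordinates of s (identifying Fin 2 with ZMod 2) and ψ_F s = 0 otherwise. Then, in the measurement scenario in which each of the n+1 parties may choose between the Pauli observables Y and Z, the empirical model of ψ_F is strongly contextual. -/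
open Complex Finset

/-!
Fix a global assignment `g` and measure `Z` at every party other than `i`, `j` and the target
qubit `n`. The `Z` outcomes pin those qubits, and since `G` ignores qubits `i` and `j`, the
three remaining parties see, up to a nonzero factor, the GHZ-type state
`∑_{a + b + c = γ} |a b c⟩` with `γ` the value of `G` at the pinned bits. Writing `o ↦ β o ∈ ZMod 2`
for the outcome bits, a possible joint outcome of this state has `β_i + β_j + β_n = γ` in the
context `ZZZ` and `= γ + 1` in the contexts `ZYY`, `YZY`, `YYZ`. Since `g` gives every observable
one bit, summing the last three constraints gives `β_i^Z + β_j^Z + β_n^Z = γ + 1`, against the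
first: Mermin's parity argument.
-/

open Function

lemma prod_eq_ite_of_pinned {ι β R : Type*} [Fintype ι] [DecidableEq ι] [DecidableEq β]
    [CommSemiring R] {i j : ι} (hij : i ≠ j) (z : ι → β) (w : ι → β → R)
    (hw : ∀ k, k ≠ i → k ≠ j → w k = Pi.single (z k) 1) (q : ι → β) :
    ∏ k, w k (q k) =
      if q = update (update z i (q i)) j (q j) then w i (q i) * w j (q j) else 0 := by
  have hpin :
      (∀ k ∈ ({i, j} : Finset ι)ᶜ, q k = z k) ↔ q = update (update z i (q i)) j (q j) := by
    simp only [Finset.mem_compl, Finset.mem_insert, Finset.mem_singleton, not_or, and_imp]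
    constructor
    · intro h
      funext k
      by_cases hkj : k = j
      · simp [hkj]
      by_cases hki : k = i
      · simp [hki, hij]
      simp [hki, hkj, h k hki hkj]
    · intro h k hki hkj
      simpa [hki, hkj] using congrFun h k
  rw [← Finset.prod_mul_prod_compl {i, j}, Finset.prod_pair hij,
    Finset.prod_congr rfl fun k hk => by
      simp only [Finset.mem_compl, Finset.mem_insert, Finset.mem_singleton, not_or] at hk
      rw [hw k hk.1 hk.2, Pi.single_apply],
    Finset.prod_boole]
  simp only [hpin, mul_ite, mul_one, mul_zero]

lemma sum_prod_mul_of_pinned {ι β R : Type*} [Fintype ι] [DecidableEq ι] [Fintype β]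
    [DecidableEq β] [CommSemiring R] {i j : ι} (hij : i ≠ j) (z : ι → β) (w : ι → β → R)
    (hw : ∀ k, k ≠ i → k ≠ j → w k = Pi.single (z k) 1) (T : (ι → β) → R) :
    ∑ q, (∏ k, w k (q k)) * T q = ∑ a, ∑ b, w i a * w j b * T (update (update z i a) j b) := by
  set φ : β × β → ι → β := fun p => update (update z i p.1) j p.2 with hφ
  have hφi : ∀ p, φ p i = p.1 := fun p => by simp [hφ, hij]
  have hφj : ∀ p, φ p j = p.2 := fun p => by simp [hφ]
  have himage : Finset.univ.filter (fun q => q = φ (q i, q j)) = Finset.univ.image φ := by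
    ext q
    simp only [Finset.mem_filter, Finset.mem_univ, true_and, Finset.mem_image]
    refine ⟨fun h => ⟨_, h.symm⟩, ?_⟩
    rintro ⟨p, rfl⟩
    rw [hφi, hφj]
  have hinj : Injective φ := fun p p' h => Prod.ext (by rw [← hφi, h, hφi]) (by rw [← hφj, h, hφj])
  calc ∑ q, (∏ k, w k (q k)) * T q
      = ∑ q ∈ Finset.univ.filter (fun q => q = φ (q i, q j)), w i (q i) * w j (q j) * T q := by
        rw [Finset.sum_filter]
        simp only [prod_eq_ite_of_pinned hij z w hw, ite_mul, zero_mul]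
        rfl
    _ = ∑ p : β × β, w i p.1 * w j p.2 * T (φ p) := by
        rw [himage, Finset.sum_image hinj.injOn]
        simp only [hφi, hφj]
    _ = _ := Fintype.sum_prod_type _

lemma ZMod.two_eq_zero_or_one (x : ZMod 2) : x = 0 ∨ x = 1 := by decide +revert

noncomputable def bra (m : Obs) (o : Bool) (x : Fin 2) : ℂ :=
  starRingEnd ℂ ((if o then m.eplus else m.eminus) x)

lemma jointProb_ne_zero_iff {n : ℕ} (ψ : (Fin n → Fin 2) → ℂ) (c : Fin n → Obs)
    (o : Fin n → Bool) :
    jointProb ψ c o ≠ 0 ↔ ∑ s, (∏ k, bra (c k) (o k) (s k)) * ψ s ≠ 0 := by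
  simp [jointProb, bra]

lemma bra_pauliZ (o : Bool) : bra pauliZ o = Pi.single (if o then 0 else 1) 1 := by
  funext x
  cases o <;> fin_cases x <;> simp [bra, pauliZ]

def outcomeBit (o : Bool) : ZMod 2 := if o then 0 else 1

noncomputable def xorAmplitude (u v w : Fin 2 → ℂ) (γ : ZMod 2) : ℂ :=
  ∑ a : Fin 2, ∑ b : Fin 2, ∑ c : Fin 2,
    if ((a : ℕ) : ZMod 2) + (b : ℕ) + (c : ℕ) = γ then u a * v b * w c else 0

lemma xorAmplitude_comm₁₂ (u v w : Fin 2 → ℂ) (γ : ZMod 2) :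
    xorAmplitude u v w γ = xorAmplitude v u w γ := by
  unfold xorAmplitude
  rw [Finset.sum_comm]
  refine Finset.sum_congr rfl fun b _ => Finset.sum_congr rfl fun a _ =>
    Finset.sum_congr rfl fun c _ => ?_
  rw [add_comm ((b : ℕ) : ZMod 2), mul_comm (v b)]

lemma xorAmplitude_comm₂₃ (u v w : Fin 2 → ℂ) (γ : ZMod 2) :
    xorAmplitude u v w γ = xorAmplitude u w v γ := by
  unfold xorAmplitude
  refine Finset.sum_congr rfl fun a _ => ?_
  rw [Finset.sum_comm]
  refine Finset.sum_congr rfl fun c _ => Finset.sum_congr rfl fun b _ => ?_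
  rw [add_right_comm _ ((c : ℕ) : ZMod 2), mul_right_comm (u a)]

lemma xorAmplitude_pauliZ_pauliZ_pauliZ_ne_zero_iff (a b c : Bool) (γ : ZMod 2) :
    xorAmplitude (bra pauliZ a) (bra pauliZ b) (bra pauliZ c) γ ≠ 0 ↔
      outcomeBit a + outcomeBit b + outcomeBit c = γ := by
  cases a <;> cases b <;> cases c <;> obtain rfl | rfl := ZMod.two_eq_zero_or_one γ <;>
    simp +decide [xorAmplitude, Fin.sum_univ_two, bra, pauliZ]

lemma xorAmplitude_pauliZ_pauliY_pauliY_ne_zero_iff (a b c : Bool) (γ : ZMod 2) :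
    xorAmplitude (bra pauliZ a) (bra pauliY b) (bra pauliY c) γ ≠ 0 ↔
      outcomeBit a + outcomeBit b + outcomeBit c = γ + 1 := by
  cases a <;> cases b <;> cases c <;> obtain rfl | rfl := ZMod.two_eq_zero_or_one γ <;>
    simp +decide [xorAmplitude, Fin.sum_univ_two, bra, pauliZ, pauliY] <;>
    ring_nf <;> simp

noncomputable def balancedState (n : ℕ) (F : (Fin n → ZMod 2) → ZMod 2)
    (s : Fin (n + 1) → Fin 2) : ℂ :=
  if ((s (Fin.last n) : ℕ) : ZMod 2) = F (fun k => ((s k.castSucc : ℕ) : ZMod 2))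
  then ((((Real.sqrt 2) ^ n)⁻¹ : ℝ) : ℂ) else 0

lemma sum_prod_mul_balancedState {n : ℕ} (F : (Fin n → ZMod 2) → ZMod 2)
    (w : Fin (n + 1) → Fin 2 → ℂ) :
    ∑ s, (∏ k, w k (s k)) * balancedState n F s =
      ((((Real.sqrt 2) ^ n)⁻¹ : ℝ) : ℂ) * ∑ q : Fin n → Fin 2, (∏ k, w k.castSucc (q k)) *
        ∑ b : Fin 2, if ((b : ℕ) : ZMod 2) = F (fun k => ((q k : ℕ) : ZMod 2))
          then w (Fin.last n) b else 0 := by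
  rw [← (Fin.snocEquiv fun _ => Fin 2).sum_comp, Fintype.sum_prod_type, Finset.sum_comm,
    Finset.mul_sum]
  refine Finset.sum_congr rfl fun q _ => ?_
  rw [Finset.mul_sum, Finset.mul_sum]
  refine Finset.sum_congr rfl fun b _ => ?_
  simp only [Fin.snocEquiv_apply, Fin.prod_univ_castSucc, Fin.snoc_castSucc, Fin.snoc_last,
    balancedState]
  split_ifs <;> ring

lemma sum_prod_mul_balancedState_of_xor {n : ℕ} {F G : (Fin n → ZMod 2) → ZMod 2} {i j : Fin n}
    (hij : i ≠ j) (hG : ∀ q q' : Fin n → ZMod 2, (∀ k, k ≠ i → k ≠ j → q k = q' k) → G q = G q')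
    (hF : ∀ q, F q = q i + q j + G q) (z : Fin n → Fin 2) (w : Fin (n + 1) → Fin 2 → ℂ)
    (hw : ∀ k, k ≠ i → k ≠ j → w k.castSucc = Pi.single (z k) 1) :
    ∑ s, (∏ k, w k (s k)) * balancedState n F s =
      ((((Real.sqrt 2) ^ n)⁻¹ : ℝ) : ℂ) * xorAmplitude (w i.castSucc) (w j.castSucc)
        (w (Fin.last n)) (G fun k => ((z k : ℕ) : ZMod 2)) := by
  rw [sum_prod_mul_balancedState, sum_prod_mul_of_pinned hij z _ hw]
  congr 1
  refine Finset.sum_congr rfl fun a _ => Finset.sum_congr rfl fun b _ => ?_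
  have hG' : G (fun k => ((update (update z i a) j b k : ℕ) : ZMod 2)) =
      G fun k => ((z k : ℕ) : ZMod 2) :=
    hG _ _ fun k hki hkj => by simp [hki, hkj]
  rw [Finset.mul_sum]
  refine Finset.sum_congr rfl fun c _ => ?_
  simp only [hF, hG', update_self, update_of_ne hij, mul_ite, mul_zero]
  congr 1
  -- `c = a + b + γ ↔ a + b + c = γ` in characteristic 2
  grind

lemma exists_xorAmplitude_ne_zero_of_consistent {n : ℕ} {F G : (Fin n → ZMod 2) → ZMod 2}
    {i j : Fin n} (hij : i ≠ j)
    (hG : ∀ q q' : Fin n → ZMod 2, (∀ k, k ≠ i → k ≠ j → q k = q' k) → G q = G q')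
    (hF : ∀ q, F q = q i + q j + G q) {M : Fin (n + 1) → Set Obs} (hZ : ∀ k, pauliZ ∈ M k)
    {g : Fin (n + 1) → Obs → Bool} (hg : Consistent (balancedState n F) M g) :
    ∃ γ : ZMod 2, ∀ mi ∈ M i.castSucc, ∀ mj ∈ M j.castSucc, ∀ ml ∈ M (Fin.last n),
      xorAmplitude (bra mi (g i.castSucc mi)) (bra mj (g j.castSucc mj))
        (bra ml (g (Fin.last n) ml)) γ ≠ 0 := by
  set z : Fin n → Fin 2 := fun k => if g k.castSucc pauliZ then 0 else 1
  refine ⟨G fun k => ((z k : ℕ) : ZMod 2), fun mi hmi mj hmj ml hml => ?_⟩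
  have hij' : i.castSucc ≠ j.castSucc := Fin.castSucc_injective n |>.ne hij
  set c : Fin (n + 1) → Obs :=
    update (update (update (fun _ => pauliZ) i.castSucc mi) j.castSucc mj) (Fin.last n) ml
  have hci : c i.castSucc = mi := by simp [c, hij', (Fin.castSucc_lt_last i).ne]
  have hcj : c j.castSucc = mj := by simp [c, (Fin.castSucc_lt_last j).ne]
  have hcl : c (Fin.last n) = ml := by simp [c]
  have hcZ : ∀ k, k ≠ i → k ≠ j → c k.castSucc = pauliZ := fun k hki hkj => by
    simp [c, (Fin.castSucc_lt_last k).ne, hki, hkj]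
  have hcM : ∀ k, c k ∈ M k := by
    intro k
    simp only [c, update_apply]
    split_ifs with hl hj hi
    · exact hl ▸ hml
    · exact hj ▸ hmj
    · exact hi ▸ hmi
    · exact hZ k
  have hamp := (jointProb_ne_zero_iff _ c _).1 (hg c hcM)
  rw [sum_prod_mul_balancedState_of_xor hij hG hF z (fun k => bra (c k) (g k (c k)))
    fun k hki hkj => by simp only [hcZ k hki hkj, bra_pauliZ, z]] at hamp
  simpa [hci, hcj, hcl] using right_ne_zero_of_mul hamp

theorem balanced_xor_stronglyContextual_general (n : ℕ)
    (F : (Fin n → ZMod 2) → ZMod 2) (i j : Fin n) (hij : i ≠ j)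
    (G : (Fin n → ZMod 2) → ZMod 2)
    (hG : ∀ q q' : Fin n → ZMod 2, (∀ k, k ≠ i → k ≠ j → q k = q' k) → G q = G q')
    (hF : ∀ q, F q = q i + q j + G q) :
    StronglyContextual
      (fun s : Fin (n + 1) → Fin 2 =>
        if ((s (Fin.last n) : ℕ) : ZMod 2) =
            F (fun k : Fin n => ((s k.castSucc : ℕ) : ZMod 2))
        then ((((Real.sqrt 2) ^ n)⁻¹ : ℝ) : ℂ) else 0)
      (fun _ : Fin (n + 1) => ({pauliY, pauliZ} : Set Obs)) := by
  rintro ⟨g, hg⟩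
  have hY : pauliY ∈ ({pauliY, pauliZ} : Set Obs) := Set.mem_insert _ _
  have hZ : pauliZ ∈ ({pauliY, pauliZ} : Set Obs) := Set.mem_insert_of_mem _ rfl
  obtain ⟨γ, hγ⟩ := exists_xorAmplitude_ne_zero_of_consistent hij hG hF (fun _ => hZ) hg
  have hZZZ := (xorAmplitude_pauliZ_pauliZ_pauliZ_ne_zero_iff _ _ _ γ).1 (hγ _ hZ _ hZ _ hZ)
  have hZYY := (xorAmplitude_pauliZ_pauliY_pauliY_ne_zero_iff _ _ _ γ).1 (hγ _ hZ _ hY _ hY)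
  have hYZY := (xorAmplitude_pauliZ_pauliY_pauliY_ne_zero_iff _ _ _ γ).1
    (xorAmplitude_comm₁₂ _ _ _ _ ▸ hγ _ hY _ hZ _ hY)
  have hYYZ := (xorAmplitude_pauliZ_pauliY_pauliY_ne_zero_iff _ _ _ γ).1
    (xorAmplitude_comm₁₂ _ _ _ _ ▸ xorAmplitude_comm₂₃ _ _ _ _ ▸ hγ _ hY _ hY _ hZ)
  grind

/-- Any balanced `(n+1)`-qubit state whose functional dependency has the form
`F q = q i + q j + G q` with `G` not depending on the coordinates `i`, `j` is strongly
contextual for the scenario where each party chooses between Pauli Y and Z. -/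
theorem balanced_xor_stronglyContextual (n : ℕ) (hn : 2 ≤ n)
    (F : (Fin n → ZMod 2) → ZMod 2) (i j : Fin n) (hij : i ≠ j)
    (G : (Fin n → ZMod 2) → ZMod 2)
    (hG : ∀ q q' : Fin n → ZMod 2, (∀ k, k ≠ i → k ≠ j → q k = q' k) → G q = G q')
    (hF : ∀ q, F q = q i + q j + G q) :
    StronglyContextual
      (fun s : Fin (n + 1) → Fin 2 =>
        if ((s (Fin.last n) : ℕ) : ZMod 2) =
            F (fun k : Fin n => ((s k.castSucc : ℕ) : ZMod 2))
        then ((((Real.sqrt 2) ^ n)⁻¹ : ℝ) : ℂ) else 0)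
      (fun _ : Fin (n + 1) => ({pauliY, pauliZ} : Set Obs)) :=
  balanced_xor_stronglyContextual_general n F i j hij G hG hF
end

section
/- There is no nonempty set S of pairs (f, g) with f, g : Fin 2 → Fin 2 such that for every x, y ∈ Fin 2, the set { (f x, g y) : (f, g) ∈ S } equals Supp x y, where Supp 0 0 = Fin 2 × Fin 2 (all four outcomes), Supp 0 1 = (Fin 2 × Fin 2) \ {(0,0)}, Supp 1 0 = (Fin 2 × Fin 2) \ {(0,0)}, and Supp 1 1 = (Fin 2 × Fin 2) \ {(1,1)}. -/
/-- The support of the possibilistic Hardy model: `hardySupp x y` is the set of possible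
joint outcomes when party A measures observable `x` and party B measures observable `y`. -/
def hardySupp (x y : Fin 2) : Set (Fin 2 × Fin 2) :=
  if x = 0 ∧ y = 0 then Set.univ
  else if x = 1 ∧ y = 1 then {p | p ≠ (1, 1)}
  else {p | p ≠ (0, 0)}

/-- The Hardy model is logically contextual: there is no nonempty set `S` of global
outcome assignments whose restriction to each context equals the support. -/
theorem hardy_no_global_section :
    ¬ ∃ S : Set ((Fin 2 → Fin 2) × (Fin 2 → Fin 2)), S.Nonempty ∧
      ∀ x y : Fin 2, (fun fg => (fg.1 x, fg.2 y)) '' S = hardySupp x y := by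
  rintro ⟨S, hne, h⟩
  -- (0,0) is possible in context (0,0), so some (f,g) ∈ S has f 0 = 0, g 0 = 0
  have h00 : ((0 : Fin 2), (0 : Fin 2)) ∈ (fun fg : (Fin 2 → Fin 2) × (Fin 2 → Fin 2) =>
      (fg.1 0, fg.2 0)) '' S := by
    rw [h 0 0]; simp [hardySupp]
  obtain ⟨⟨f, g⟩, hfgS, hfg⟩ := h00
  simp only [Prod.mk.injEq] at hfg
  obtain ⟨hf0, hg0⟩ := hfg
  have mem : ∀ x y : Fin 2, (f x, g y) ∈ hardySupp x y := by
    intro x y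
    rw [← h x y]
    exact ⟨(f, g), hfgS, rfl⟩
  have h10 := mem 1 0
  have h01 := mem 0 1
  have h11 := mem 1 1
  simp [hardySupp, Prod.ext_iff, hf0, hg0] at h10 h01 h11
  have hf1 : f 1 = 1 := by omega
  have hg1 : g 1 = 1 := by omega
  exact h11 hf1 hg1
end

section
/- For every natural number n ≥ 3, there do not exist functions a, b : Fin n → ZMod 2 such that for every finite subset S of Fin n: if the cardinality of S is congruent to 0 modulo 4, then (∑ i ∈ S, b i) + (∑ i ∉ S, a i) = 0 in ZMod 2, and if the cardinality of S is congruent to 2 modulo 4, then (∑ i ∈ S, b i) + (∑ i ∉ S, a i) = 1 in ZMod 2. -/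
/-- Strong contextuality of the `(n,2,2)` GHZ model, `n ≥ 3`: there is no global
assignment `a, b : Fin n → ZMod 2` of outcomes to the `X` and `Y` measurements of the
`n` parties which lies in the support of every context. For the context measuring `Y`
exactly at the positions in `S` (and `X` elsewhere), the support requires the sum of all
outcomes to be `0` when `|S| ≡ 0 (mod 4)` and `1` when `|S| ≡ 2 (mod 4)`. -/
theorem ghz_stronglyContextual (n : ℕ) (hn : 3 ≤ n) :
    ¬ ∃ a b : Fin n → ZMod 2, ∀ S : Finset (Fin n),
      (S.card % 4 = 0 → (∑ i ∈ S, b i) + (∑ i ∈ Sᶜ, a i) = 0) ∧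
      (S.card % 4 = 2 → (∑ i ∈ S, b i) + (∑ i ∈ Sᶜ, a i) = 1) := by
  rintro ⟨a, b, h⟩
  set i0 : Fin n := ⟨0, by omega⟩ with hi0
  set i1 : Fin n := ⟨1, by omega⟩ with hi1
  set i2 : Fin n := ⟨2, by omega⟩ with hi2
  have h01 : i0 ≠ i1 := by simp [hi0, hi1, Fin.ext_iff]
  have h12 : i1 ≠ i2 := by simp [hi1, hi2, Fin.ext_iff]
  have h02 : i0 ≠ i2 := by simp [hi0, hi2, Fin.ext_iff]
  have hA : (∑ i, a i) = 0 := by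
    have := (h ∅).1 (by simp)
    simpa using this
  have compl_sum : ∀ S : Finset (Fin n), (∑ i ∈ Sᶜ, a i) = ∑ i ∈ S, a i := by
    intro S
    have h1 : (∑ i ∈ S, a i) + ∑ i ∈ Sᶜ, a i = 0 := by
      rw [Finset.sum_add_sum_compl S a, hA]
    have h2 : (∑ i ∈ Sᶜ, a i) = -(∑ i ∈ S, a i) :=
      eq_neg_of_add_eq_zero_right h1
    rw [h2, CharTwo.neg_eq]
  have pair : ∀ i j : Fin n, i ≠ j → b i + b j + (a i + a j) = 1 := by
    intro i j hij
    have hc : ({i, j} : Finset (Fin n)).card % 4 = 2 := by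
      rw [Finset.card_pair hij]
    have := (h {i, j}).2 hc
    rwa [compl_sum, Finset.sum_pair hij, Finset.sum_pair hij] at this
  have e01 := pair i0 i1 h01
  have e12 := pair i1 i2 h12
  have e02 := pair i0 i2 h02
  have key : ∀ x0 x1 x2 y0 y1 y2 : ZMod 2,
      y0 + y1 + (x0 + x1) = 1 → y1 + y2 + (x1 + x2) = 1 →
      y0 + y2 + (x0 + x2) = 1 → False := by decide
  exact key _ _ _ _ _ _ e01 e12 e02
end

section
/- Let n > 2 and 0 < k < n. Let ψ be the Dicke state S(n,k), the n-qubit state defined by ψ s = (Nat.choose n k)^(−1/2) if the number of indices i with s i = 0 equals k, and ψ s = 0 otherwise. In the measurement scenario in which each of the n parties may choose between the Pauli observables X and Z, the empirical model of ψ is logically contextual. -/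
open Complex Finset

/-! ### Auxiliary machinery for the Dicke contextuality proof -/

/-- The Dicke state as a named function. -/
noncomputable def Dk (n k : ℕ) (s : Fin n → Fin 2) : ℂ :=
  if (Finset.univ.filter (fun i => s i = 0)).card = k
  then (((Real.sqrt (n.choose k))⁻¹ : ℝ) : ℂ) else 0

/-- The factor contributed by party with observable `m`, outcome `b`, at basis index `x`. -/
noncomputable def fac (m : Obs) (b : Bool) (x : Fin 2) : ℂ :=
  (starRingEnd ℂ) ((if b then m.eplus else m.eminus) x)

lemma jointProb_def {n : ℕ} (ψ : (Fin n → Fin 2) → ℂ) (c : Fin n → Obs) (o : Fin n → Bool) :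
    jointProb ψ c o = ‖∑ s : Fin n → Fin 2, (∏ i, fac (c i) (o i) (s i)) * ψ s‖ ^ 2 := rfl

lemma facZ (b : Bool) (x : Fin 2) :
    fac pauliZ b x = if x = (if b then 0 else 1) then 1 else 0 := by
  fin_cases x <;> cases b <;> simp [fac, pauliZ]

lemma facX0 (b : Bool) : fac pauliX b 0 = (((Real.sqrt 2)⁻¹ : ℝ) : ℂ) := by
  cases b <;> simp [fac, pauliX]

lemma facX1 (b : Bool) :
    fac pauliX b 1 = if b then (((Real.sqrt 2)⁻¹ : ℝ) : ℂ) else -(((Real.sqrt 2)⁻¹ : ℝ) : ℂ) := by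
  cases b <;> simp [fac, pauliX]

lemma facX_ne (b : Bool) (x : Fin 2) : fac pauliX b x ≠ 0 := by
  have hr : (((Real.sqrt 2)⁻¹ : ℝ) : ℂ) ≠ 0 := by
    simp [Real.sqrt_eq_zero']
  match x with
  | 0 => rw [facX0]; exact hr
  | 1 => rw [facX1]; cases b <;> simp [hr]
lemma count_split {n : ℕ} (i0 i1 : Fin n) (h : i0 ≠ i1) (p : Fin n → Prop) [DecidablePred p] :
    (Finset.univ.filter (fun l => p l)).card
      = (if p i0 then 1 else 0) + ((if p i1 then 1 else 0)
        + ∑ l ∈ (Finset.univ.erase i0).erase i1, (if p l then 1 else 0)) := by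
  rw [Finset.card_filter]
  rw [← Finset.add_sum_erase _ _ (Finset.mem_univ i0),
    ← Finset.add_sum_erase _ _ (Finset.mem_erase.2 ⟨h.symm, Finset.mem_univ i1⟩)]

lemma allZ (n k : ℕ) (o : Fin n → Bool) :
    jointProb (Dk n k) (fun _ => pauliZ) o
      = ‖Dk n k (fun i => if o i then 0 else 1)‖ ^ 2 := by
  rw [jointProb_def]
  congr 2
  rw [Finset.sum_eq_single_of_mem (fun i => if o i then (0 : Fin 2) else 1) (Finset.mem_univ _)]
  · rw [Finset.prod_eq_one fun i _ => by rw [facZ, if_pos rfl], one_mul]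
  · intro s _ hne
    obtain ⟨i, hi⟩ : ∃ i, s i ≠ (if o i then (0 : Fin 2) else 1) := by
      by_contra hcon; push_neg at hcon; exact hne (funext hcon)
    rw [Finset.prod_eq_zero (Finset.mem_univ i) (by rw [facZ, if_neg hi]), zero_mul]

lemma Dk_ne_zero_iff {n k : ℕ} (hkn : k ≤ n) (s : Fin n → Fin 2) :
    Dk n k s ≠ 0 ↔ (Finset.univ.filter (fun i => s i = 0)).card = k := by
  unfold Dk
  split_ifs with h
  · simp only [h, iff_true, ne_eq, Complex.ofReal_eq_zero, inv_eq_zero]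
    intro hc
    have h1 := Real.sqrt_eq_zero'.1 hc
    have h2 : 0 < n.choose k := Nat.choose_pos hkn
    have : (0:ℝ) < (n.choose k : ℝ) := by exact_mod_cast h2
    linarith
  · simp [h]

lemma consistent_card {n k : ℕ} (hkn : k ≤ n) {g : Fin n → Obs → Bool}
    (hg : Consistent (Dk n k) (fun _ => ({pauliX, pauliZ} : Set Obs)) g) :
    (Finset.univ.filter (fun i => g i pauliZ = true)).card = k := by
  have h := hg (fun _ => pauliZ) (fun i => by simp)
  rw [allZ] at h
  have hD : Dk n k (fun i => if g i pauliZ then 0 else 1) ≠ 0 := by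
    intro h0; rw [h0] at h; simp at h
  rw [Dk_ne_zero_iff hkn] at hD
  rw [← hD]
  congr 1
  apply Finset.filter_congr
  intro i _
  cases hgi : g i pauliZ <;> simp [hgi]
lemma fin2 (x : Fin 2) : x = 0 ∨ x = 1 := by omega

lemma cancel {n k : ℕ} (i0 i1 : Fin n) (hne : i0 ≠ i1) (o : Fin n → Bool)
    (hxo : o i0 ≠ o i1)
    (htail : (∑ l ∈ (Finset.univ.erase i0).erase i1, (if o l then 1 else 0)) + 1 = k) :
    jointProb (Dk n k) (fun l => if l = i0 ∨ l = i1 then pauliX else pauliZ) o = 0 := by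
  set N : ℕ := ∑ l ∈ (Finset.univ.erase i0).erase i1, (if o l then 1 else 0) with hN
  set c : Fin n → Obs := fun l => if l = i0 ∨ l = i1 then pauliX else pauliZ with hc
  set s01 : Fin n → Fin 2 :=
    fun l => if l = i0 then 0 else if l = i1 then 1 else if o l then 0 else 1 with hs01
  set s10 : Fin n → Fin 2 :=
    fun l => if l = i0 then 1 else if l = i1 then 0 else if o l then 0 else 1 with hs10
  have htailgen : ∀ s : Fin n → Fin 2, (∀ l, l ≠ i0 → l ≠ i1 → s l = (if o l then 0 else 1)) →
      (∑ l ∈ (Finset.univ.erase i0).erase i1, (if s l = 0 then 1 else 0)) = N := by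
    intro s hs
    rw [hN]
    apply Finset.sum_congr rfl
    intro l hl
    have hl1 : l ≠ i1 := (Finset.mem_erase.1 hl).1
    have hl0 : l ≠ i0 := (Finset.mem_erase.1 (Finset.mem_erase.1 hl).2).1
    rw [hs l hl0 hl1]
    cases o l <;> simp
  have hpat01 : ∀ l, l ≠ i0 → l ≠ i1 → s01 l = (if o l then 0 else 1) := by
    intro l hl0 hl1; simp [hs01, hl0, hl1]
  have hpat10 : ∀ l, l ≠ i0 → l ≠ i1 → s10 l = (if o l then 0 else 1) := by
    intro l hl0 hl1; simp [hs10, hl0, hl1]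
  have e010 : s01 i0 = 0 := by simp [hs01]
  have e011 : s01 i1 = 1 := by simp [hs01, Ne.symm hne]
  have e100 : s10 i0 = 1 := by simp [hs10]
  have e101 : s10 i1 = 0 := by simp [hs10, Ne.symm hne]
  have hne2 : s01 ≠ s10 := by
    intro h
    have h0 := congrFun h i0
    rw [e010, e100] at h0
    exact absurd h0 (by decide)
  rw [jointProb_def]
  have hzero : (∑ s : Fin n → Fin 2, (∏ i, fac (c i) (o i) (s i)) * Dk n k s) = 0 := by
    rw [Finset.sum_eq_add_of_mem s01 s10 (Finset.mem_univ _) (Finset.mem_univ _) hne2 ?rest]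
    case rest =>
      intro s _ hs
      by_cases htl : ∀ l, l ≠ i0 → l ≠ i1 → s l = (if o l then 0 else 1)
      · -- s matches the Z-pattern off {i0,i1}; since s ∉ {s01,s10} its ψ-value vanishes
        have hval : (s i0 = 0 ∧ s i1 = 0) ∨ (s i0 = 1 ∧ s i1 = 1) := by
          have hfun : ∀ x y : Fin 2, s i0 = x → s i1 = y →
              s = fun l => if l = i0 then x else if l = i1 then y else if o l then 0 else 1 := by
            intro x y hx hy
            funext l
            by_cases hl0 : l = i0
            · subst hl0; simpa using hx
            · by_cases hl1 : l = i1
              · subst hl1; simp [hl0, hy]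
              · simp [hl0, hl1, htl l hl0 hl1]
          rcases fin2 (s i0) with h0 | h0 <;> rcases fin2 (s i1) with h1 | h1
          · exact Or.inl ⟨h0, h1⟩
          · exact absurd (hfun _ _ h0 h1) hs.1
          · exact absurd (hfun _ _ h0 h1) hs.2
          · exact Or.inr ⟨h0, h1⟩
        have hcne : (Finset.univ.filter (fun l => s l = 0)).card ≠ k := by
          rw [count_split i0 i1 hne, htailgen s htl]
          rcases hval with ⟨h0, h1⟩ | ⟨h0, h1⟩ <;> rw [h0, h1] <;> simp <;> omega
        unfold Dk
        rw [if_neg hcne, mul_zero]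
      · push_neg at htl
        obtain ⟨l, hl0, hl1, hsl⟩ := htl
        have hcl : c l = pauliZ := by simp [hc, hl0, hl1]
        rw [Finset.prod_eq_zero (Finset.mem_univ l) (by rw [hcl, facZ, if_neg hsl]), zero_mul]
    · -- the two surviving terms cancel
      have hprod : ∀ s : Fin n → Fin 2, (∏ i, fac (c i) (o i) (s i))
          = fac (c i0) (o i0) (s i0) * (fac (c i1) (o i1) (s i1)
            * ∏ l ∈ (Finset.univ.erase i0).erase i1, fac (c l) (o l) (s l)) := by
        intro s
        rw [← Finset.mul_prod_erase Finset.univ _ (Finset.mem_univ i0),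
          ← Finset.mul_prod_erase _ _ (Finset.mem_erase.2 ⟨Ne.symm hne, Finset.mem_univ i1⟩)]
      have hci0 : c i0 = pauliX := by simp [hc]
      have hci1 : c i1 = pauliX := by simp [hc]
      have htp : (∏ l ∈ (Finset.univ.erase i0).erase i1, fac (c l) (o l) (s01 l))
          = ∏ l ∈ (Finset.univ.erase i0).erase i1, fac (c l) (o l) (s10 l) := by
        apply Finset.prod_congr rfl
        intro l hl
        have hl1 : l ≠ i1 := (Finset.mem_erase.1 hl).1
        have hl0 : l ≠ i0 := (Finset.mem_erase.1 (Finset.mem_erase.1 hl).2).1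
        rw [hpat01 l hl0 hl1, hpat10 l hl0 hl1]
      have hD01 : Dk n k s01 = (((Real.sqrt (n.choose k))⁻¹ : ℝ) : ℂ) := by
        unfold Dk
        rw [if_pos]
        rw [count_split i0 i1 hne, htailgen s01 hpat01, e010, e011]
        simp
        omega
      have hD10 : Dk n k s10 = (((Real.sqrt (n.choose k))⁻¹ : ℝ) : ℂ) := by
        unfold Dk
        rw [if_pos]
        rw [count_split i0 i1 hne, htailgen s10 hpat10, e100, e101]
        simp
        omega
      rw [hprod s01, hprod s10, hci0, hci1, e010, e011, e100, e101, hD01, hD10, htp]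
      cases hb0 : o i0 <;> cases hb1 : o i1
      · exact absurd (hb0.trans hb1.symm) hxo
      · simp only [hb0, hb1, facX0, facX1]; norm_num
      · simp only [hb0, hb1, facX0, facX1]; norm_num
      · exact absurd (hb0.trans hb1.symm) hxo
  rw [hzero]
  simp
lemma ind_ne (x y : Fin 2) (h : x ≠ y) :
    (if x = 0 then (1:ℕ) else 0) + (if y = 0 then 1 else 0) = 1 := by
  fin_cases x <;> fin_cases y <;> simp_all

lemma witness {n k : ℕ} (i0 i1 : Fin n) (hne : i0 ≠ i1) (σ : Fin n → Fin 2)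
    (hcount : (Finset.univ.filter (fun l => σ l = 0)).card = k) (hvv : σ i0 = σ i1) :
    jointProb (Dk n k) (fun l => if l = i0 ∨ l = i1 then pauliX else pauliZ)
      (fun l => if l = i0 then true else if l = i1 then false else decide (σ l = 0)) ≠ 0 := by
  have hkn : k ≤ n := by
    rw [← hcount]
    simpa using Finset.card_filter_le Finset.univ (fun l => σ l = 0)
  set c : Fin n → Obs := fun l => if l = i0 ∨ l = i1 then pauliX else pauliZ with hc
  set o : Fin n → Bool :=
    fun l => if l = i0 then true else if l = i1 then false else decide (σ l = 0) with ho
  have hpat : ∀ l, l ≠ i0 → l ≠ i1 → (if o l then (0:Fin 2) else 1) = σ l := by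
    intro l hl0 hl1
    have : o l = decide (σ l = 0) := by simp [ho, hl0, hl1]
    rw [this]
    rcases fin2 (σ l) with h | h <;> rw [h] <;> simp [h]
  rw [jointProb_def]
  have hsum : (∑ s : Fin n → Fin 2, (∏ i, fac (c i) (o i) (s i)) * Dk n k s)
      = (∏ i, fac (c i) (o i) (σ i)) * Dk n k σ := by
    apply Finset.sum_eq_single_of_mem σ (Finset.mem_univ _)
    intro s _ hs
    by_cases htl : ∀ l, l ≠ i0 → l ≠ i1 → s l = σ l
    · -- s matches σ off {i0,i1} but s ≠ σ, so the zero count is off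
      have hcne : (Finset.univ.filter (fun l => s l = 0)).card ≠ k := by
        rw [count_split i0 i1 hne (fun l => s l = 0)]
        rw [← hcount, count_split i0 i1 hne (fun l => σ l = 0)]
        have htails : (∑ l ∈ (Finset.univ.erase i0).erase i1, (if s l = 0 then 1 else 0))
            = ∑ l ∈ (Finset.univ.erase i0).erase i1, (if σ l = 0 then (1:ℕ) else 0) := by
          apply Finset.sum_congr rfl
          intro l hl
          have hl1 : l ≠ i1 := (Finset.mem_erase.1 hl).1
          have hl0 : l ≠ i0 := (Finset.mem_erase.1 (Finset.mem_erase.1 hl).2).1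
          rw [htl l hl0 hl1]
        rw [htails]
        have hAB : (if σ i0 = 0 then (1:ℕ) else 0) = (if σ i1 = 0 then 1 else 0) := by
          rw [hvv]
        have hone : ¬ (s i0 = σ i0 ∧ s i1 = σ i1) := by
          rintro ⟨h0, h1⟩
          apply hs
          funext l
          by_cases hl0 : l = i0
          · subst hl0; exact h0
          · by_cases hl1 : l = i1
            · subst hl1; exact h1
            · exact htl l hl0 hl1
        have hA : (if s i0 = 0 then (1:ℕ) else 0) = (if σ i0 = 0 then 1 else 0)
            ∨ (if s i0 = 0 then (1:ℕ) else 0) + (if σ i0 = 0 then 1 else 0) = 1 := by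
          by_cases h : s i0 = σ i0
          · left; rw [h]
          · right; exact ind_ne _ _ h
        have hB : (if s i1 = 0 then (1:ℕ) else 0) = (if σ i1 = 0 then 1 else 0)
            ∨ (if s i1 = 0 then (1:ℕ) else 0) + (if σ i1 = 0 then 1 else 0) = 1 := by
          by_cases h : s i1 = σ i1
          · left; rw [h]
          · right; exact ind_ne _ _ h
        have ind_inj : ∀ x y : Fin 2,
            (if x = 0 then (1:ℕ) else 0) = (if y = 0 then 1 else 0) → x = y := by decide
        have b01 : ∀ x : Fin 2,
            (if x = 0 then (1:ℕ) else 0) = 0 ∨ (if x = 0 then (1:ℕ) else 0) = 1 := by decide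
        rcases hA with hA | hA
        · rcases hB with hB | hB
          · exact absurd ⟨ind_inj _ _ hA, ind_inj _ _ hB⟩ hone
          · rcases b01 (σ i0) with h' | h' <;> omega
        · rcases hB with hB | hB
          · rcases b01 (σ i0) with h' | h' <;> omega
          · rcases b01 (σ i0) with h' | h' <;> rcases b01 (s i0) with h'' | h'' <;> omega
      unfold Dk
      rw [if_neg hcne, mul_zero]
    · push_neg at htl
      obtain ⟨l, hl0, hl1, hsl⟩ := htl
      have hcl : c l = pauliZ := by simp [hc, hl0, hl1]
      have : s l ≠ (if o l then 0 else 1) := by rw [hpat l hl0 hl1]; exact hsl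
      rw [Finset.prod_eq_zero (Finset.mem_univ l) (by rw [hcl, facZ, if_neg this]), zero_mul]
  rw [hsum]
  have hprod : (∏ i, fac (c i) (o i) (σ i)) ≠ 0 := by
    rw [Finset.prod_ne_zero_iff]
    intro l _
    by_cases hl0 : l = i0
    · subst hl0
      have : c l = pauliX := by simp [hc]
      rw [this]; exact facX_ne _ _
    · by_cases hl1 : l = i1
      · subst hl1
        have : c l = pauliX := by simp [hc]
        rw [this]; exact facX_ne _ _
      · have hcl : c l = pauliZ := by simp [hc, hl0, hl1]
        rw [hcl, facZ, if_pos (hpat l hl0 hl1).symm]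
        exact one_ne_zero
  have hDσ : Dk n k σ ≠ 0 := by
    rw [Dk_ne_zero_iff hkn]
    exact hcount
  exact pow_ne_zero _ (norm_ne_zero_iff.2 (mul_ne_zero hprod hDσ))
lemma consistent_X_eq {n k : ℕ} (hkn : k ≤ n) {g : Fin n → Obs → Bool}
    (hg : Consistent (Dk n k) (fun _ => ({pauliX, pauliZ} : Set Obs)) g)
    {i j : Fin n} (hij : i ≠ j) (hai : g i pauliZ = true) (haj : g j pauliZ = false) :
    g i pauliX = g j pauliX := by
  by_contra hb
  apply hg (fun l => if l = i ∨ l = j then pauliX else pauliZ)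
    (fun l => by by_cases h : l = i ∨ l = j <;> simp [h])
  refine cancel i j hij _ ?_ ?_
  · simpa using hb
  · have hsum : (∑ l ∈ (Finset.univ.erase i).erase j,
        (if g l ((fun l => if l = i ∨ l = j then pauliX else pauliZ) l) then (1:ℕ) else 0))
        = ∑ l ∈ (Finset.univ.erase i).erase j, (if g l pauliZ then (1:ℕ) else 0) := by
      apply Finset.sum_congr rfl
      intro l hl
      have hl1 : l ≠ j := (Finset.mem_erase.1 hl).1
      have hl0 : l ≠ i := (Finset.mem_erase.1 (Finset.mem_erase.1 hl).2).1
      simp [hl0, hl1]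
    rw [hsum]
    have hcard := consistent_card hkn hg
    rw [count_split i j hij (fun l => g l pauliZ = true), hai, haj] at hcard
    simp at hcard ⊢
    omega

lemma sigma_exists (n k : ℕ) (hn : 2 < n) (hk : 0 < k) (hkn : k < n) :
    ∃ σ : Fin n → Fin 2, (Finset.univ.filter (fun l => σ l = 0)).card = k ∧
      σ ⟨0, by omega⟩ = σ ⟨1, by omega⟩ := by
  by_cases h2 : 2 ≤ k
  · refine ⟨fun l => if l.val < k then 0 else 1, ?_, ?_⟩
    · have h1 : (Finset.univ.filter (fun l : Fin n => (if l.val < k then (0:Fin 2) else 1) = 0))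
          = Finset.univ.filter (fun l : Fin n => l < (⟨k, hkn⟩ : Fin n)) := by
        apply Finset.filter_congr
        intro l _
        split_ifs with h <;> simp [h, Fin.lt_def]
      have h2' : Finset.univ.filter (fun l : Fin n => l < (⟨k, hkn⟩ : Fin n))
          = Finset.Iio (⟨k, hkn⟩ : Fin n) := by
        ext l; simp
      rw [h1, h2', Fin.card_Iio]
    · simp only []
      rw [if_pos (by omega : (0:ℕ) < k), if_pos (by omega : (1:ℕ) < k)]
  · have hk1 : k = 1 := by omega
    refine ⟨fun l => if l.val = n - 1 then 0 else 1, ?_, ?_⟩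
    · have h1 : (Finset.univ.filter (fun l : Fin n => (if l.val = n - 1 then (0:Fin 2) else 1) = 0))
          = {(⟨n - 1, by omega⟩ : Fin n)} := by
        ext l
        simp only [Finset.mem_filter, Finset.mem_univ, true_and, Finset.mem_singleton, Fin.ext_iff]
        split_ifs with h <;> simp [h]
      rw [h1, Finset.card_singleton, hk1]
    · simp only []
      rw [if_neg (by omega : ¬ (0:ℕ) = n - 1), if_neg (by omega : ¬ (1:ℕ) = n - 1)]
/-- The Dicke state `S(n,k)` is logically contextual (for `n > 2`, `0 < k < n`) in the
scenario where each of the `n` parties chooses between the Pauli observables X and Z. -/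
theorem dicke_logicallyContextual (n k : ℕ) (hn : 2 < n) (hk : 0 < k) (hkn : k < n) :
    LogicallyContextual
      (fun s : Fin n → Fin 2 =>
        if (Finset.univ.filter (fun i => s i = 0)).card = k
        then (((Real.sqrt (n.choose k))⁻¹ : ℝ) : ℂ) else 0)
      (fun _ : Fin n => ({pauliX, pauliZ} : Set Obs)) := by
  obtain ⟨σ, hσc, hσv⟩ := sigma_exists n k hn hk hkn
  have hkn' : k ≤ n := le_of_lt hkn
  set i0 : Fin n := ⟨0, by omega⟩ with hi0
  set i1 : Fin n := ⟨1, by omega⟩ with hi1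
  have hne : i0 ≠ i1 := by simp [hi0, hi1, Fin.ext_iff]
  show LogicallyContextual (Dk n k) (fun _ => ({pauliX, pauliZ} : Set Obs))
  refine ⟨fun l => if l = i0 ∨ l = i1 then pauliX else pauliZ,
    fun l => by by_cases h : l = i0 ∨ l = i1 <;> simp [h],
    fun l => if l = i0 then true else if l = i1 then false else decide (σ l = 0),
    witness i0 i1 hne σ hσc hσv, ?_⟩
  rintro ⟨g, hg, hmatch⟩
  have hb0 : g i0 pauliX = true := by simpa using hmatch i0
  have hb1 : g i1 pauliX = false := by simpa [Ne.symm hne] using hmatch i1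
  have htail : ∀ l, l ≠ i0 → l ≠ i1 → g l pauliZ = decide (σ l = 0) := by
    intro l hl0 hl1; simpa [hl0, hl1] using hmatch l
  -- the Z-values of g at i0 and i1 agree with the pattern of σ
  have hσc0 := hσc
  have hcard := consistent_card hkn' hg
  rw [count_split i0 i1 hne (fun l => g l pauliZ = true)] at hcard
  rw [count_split i0 i1 hne (fun l => σ l = 0)] at hσc
  have htsum : (∑ l ∈ (Finset.univ.erase i0).erase i1, (if g l pauliZ = true then (1:ℕ) else 0))
      = ∑ l ∈ (Finset.univ.erase i0).erase i1, (if σ l = 0 then (1:ℕ) else 0) := by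
    apply Finset.sum_congr rfl
    intro l hl
    have hl1 : l ≠ i1 := (Finset.mem_erase.1 hl).1
    have hl0 : l ≠ i0 := (Finset.mem_erase.1 (Finset.mem_erase.1 hl).2).1
    rw [htail l hl0 hl1]
    rcases fin2 (σ l) with h | h <;> simp [h]
  rw [htsum] at hcard
  have hσ10 : σ i1 = σ i0 := hσv.symm
  rw [hσ10] at hσc
  have haZ : (g i0 pauliZ = true ↔ σ i0 = 0) ∧ (g i1 pauliZ = true ↔ σ i0 = 0) := by
    rcases fin2 (σ i0) with h | h <;>
      cases hA : g i0 pauliZ <;> cases hB : g i1 pauliZ <;>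
      rw [h] at hσc <;> simp [h, hA, hB] at hσc hcard ⊢ <;> omega
  -- there is a party p (distinct from i0, i1) where σ differs from its value at i0
  have hp : ∃ p, p ≠ i0 ∧ p ≠ i1 ∧ σ p ≠ σ i0 := by
    by_contra hcon
    push_neg at hcon
    have hconst : ∀ l, σ l = σ i0 := by
      intro l
      by_cases hl0 : l = i0
      · rw [hl0]
      · by_cases hl1 : l = i1
        · rw [hl1, hσ10]
        · exact hcon l hl0 hl1
    rcases fin2 (σ i0) with h | h
    · have : (Finset.univ.filter (fun l => σ l = 0)) = Finset.univ :=
        Finset.filter_true_of_mem (fun l _ => by rw [hconst l, h])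
      rw [this, Finset.card_univ, Fintype.card_fin] at hσc0
      omega
    · have : (Finset.univ.filter (fun l => σ l = 0)) = ∅ :=
        Finset.filter_false_of_mem (fun l _ => by rw [hconst l, h]; decide)
      rw [this, Finset.card_empty] at hσc0
      omega
  obtain ⟨p, hp0, hp1, hpσ⟩ := hp
  have haP : g p pauliZ = decide (σ p = 0) := htail p hp0 hp1
  have hcontra : g i0 pauliX = g i1 pauliX := by
    rcases fin2 (σ i0) with h | h
    · -- g i0 Z = g i1 Z = true, g p Z = false
      have hgp : g p pauliZ = false := by
        rcases fin2 (σ p) with h' | h'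
        · exact absurd (h'.trans h.symm) hpσ
        · rw [haP, h']; decide
      have h0 : g i0 pauliZ = true := haZ.1.2 h
      have h1 : g i1 pauliZ = true := haZ.2.2 h
      exact (consistent_X_eq hkn' hg (Ne.symm hp0) h0 hgp).trans
        (consistent_X_eq hkn' hg (Ne.symm hp1) h1 hgp).symm
    · -- g i0 Z = g i1 Z = false, g p Z = true
      have hσp : σ p = 0 := by
        rcases fin2 (σ p) with h' | h'
        · exact h'
        · exact absurd (h'.trans h.symm) hpσ
      have hgp : g p pauliZ = true := by rw [haP, hσp]; decide
      have h0 : g i0 pauliZ = false := by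
        cases hA : g i0 pauliZ
        · rfl
        · exact absurd (haZ.1.1 hA) (by rw [h]; decide)
      have h1 : g i1 pauliZ = false := by
        cases hA : g i1 pauliZ
        · rfl
        · exact absurd (haZ.2.1 hA) (by rw [h]; decide)
      exact (consistent_X_eq hkn' hg hp0 hgp h0).symm.trans
        (consistent_X_eq hkn' hg hp1 hgp h1)
  rw [hb0, hb1] at hcontra
  exact absurd hcontra (by decide)
end

section
/- (Going Up Lemma I.) Let ψ be an n-qubit state that is logically contextual in some measurement scenario M. Let θ be any n-qubit state, and α, β ∈ ℂ with α ≠ 0 and |α|² + |β|² = 1. For s : Fin (n+1) → Fin 2 write s' : Fin n → Fin 2 for the restriction of s to the first n coordinates. Define the (n+1)-qubit states ω₀ s = α · ψ s' if s n = 0 and β · θ s' if s n = 1, and ω₁ s = β · θ s' if s n = 0 and α · ψ s' if s n = 1. Then, in the measurement scenario that gives each party i < n its set M i and gives party n the single observable Z (e_Z⁺ = (1,0), e_Z⁻ = (0,1)), both ω₀ and ω₁ are logically contextual. -/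
open Complex Finset

lemma sum_snoc {n : ℕ} (G : (Fin (n+1) → Fin 2) → ℂ) :
    ∑ s : Fin (n+1) → Fin 2, G s
      = ∑ a : Fin 2, ∑ s' : Fin n → Fin 2, G (Fin.snoc s' a) := by
  have h := Fintype.sum_equiv
    (⟨fun p => Fin.snoc p.2 p.1, fun s => (s (Fin.last n), fun k => s k.castSucc),
      fun p => by simp, fun s => Fin.snoc_init_self s⟩ :
      (Fin 2 × (Fin n → Fin 2)) ≃ (Fin (n+1) → Fin 2))
    (fun p => G (Fin.snoc p.2 p.1)) G (fun p => rfl)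
  rw [← h, Fintype.sum_prod_type]

lemma key {n : ℕ} (f g : (Fin n → Fin 2) → ℂ) (γ₀ γ₁ : ℂ)
    (c' : Fin (n+1) → Obs) (hc : c' (Fin.last n) = pauliZ) (o' : Fin (n+1) → Bool) :
    jointProb (fun s => if s (Fin.last n) = 0 then γ₀ * f (fun k => s k.castSucc)
        else γ₁ * g (fun k => s k.castSucc)) c' o'
      = if o' (Fin.last n)
        then ‖γ₀‖^2 * jointProb f (fun k => c' k.castSucc) (fun k => o' k.castSucc)
        else ‖γ₁‖^2 * jointProb g (fun k => c' k.castSucc) (fun k => o' k.castSucc) := by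
  unfold jointProb
  rw [sum_snoc, Fin.sum_univ_two]
  simp only [Fin.prod_univ_castSucc, Fin.snoc_castSucc, Fin.snoc_last, hc]
  cases ho : o' (Fin.last n) <;>
    simp [ho, pauliZ, mul_comm, mul_assoc, mul_left_comm, ← Finset.mul_sum, norm_mul,
      mul_pow]

lemma mem_ext {n : ℕ} {M : Fin n → Set Obs} {d : Fin n → Obs} (hd : ∀ i, d i ∈ M i) :
    ∀ i : Fin (n+1), (Fin.snoc d pauliZ : Fin (n+1) → Obs) i ∈
      (if h : (i : ℕ) < n then M ⟨i, h⟩ else ({pauliZ} : Set Obs)) := by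
  intro i
  refine Fin.lastCases ?_ ?_ i
  · simp
  · intro k
    simpa using hd k

lemma auxT {n : ℕ} (f g : (Fin n → Fin 2) → ℂ) (γ₀ γ₁ : ℂ) (hγ : γ₀ ≠ 0)
    (M : Fin n → Set Obs) (hLC : LogicallyContextual f M) :
    LogicallyContextual
      (fun s : Fin (n+1) → Fin 2 => if s (Fin.last n) = 0 then γ₀ * f (fun k => s k.castSucc)
        else γ₁ * g (fun k => s k.castSucc))
      (fun i : Fin (n+1) => if h : (i:ℕ) < n then M ⟨i, h⟩ else ({pauliZ} : Set Obs)) := by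
  obtain ⟨c, hc, o, ho, hno⟩ := hLC
  refine ⟨Fin.snoc c pauliZ, mem_ext hc, Fin.snoc o true, ?_, ?_⟩
  · rw [key _ _ _ _ _ (by simp)]
    simp only [Fin.snoc_last, Fin.snoc_castSucc, if_true]
    exact mul_ne_zero (pow_ne_zero 2 (norm_ne_zero_iff.2 hγ)) (by simpa using ho)
  · rintro ⟨g', hg', hmatch⟩
    apply hno
    refine ⟨fun i m => g' i.castSucc m, ?_, ?_⟩
    · intro d hd
      have hb : g' (Fin.last n) pauliZ = true := by
        simpa using hmatch (Fin.last n)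
      have h2 := hg' (Fin.snoc d pauliZ) (mem_ext hd)
      rw [key _ _ _ _ _ (by simp)] at h2
      simp only [Fin.snoc_last, Fin.snoc_castSucc, hb, if_true] at h2
      intro h0
      exact h2 (by rw [h0, mul_zero])
    · intro i
      simpa using hmatch i.castSucc

lemma auxF {n : ℕ} (f g : (Fin n → Fin 2) → ℂ) (γ₀ γ₁ : ℂ) (hγ : γ₁ ≠ 0)
    (M : Fin n → Set Obs) (hLC : LogicallyContextual g M) :
    LogicallyContextual
      (fun s : Fin (n+1) → Fin 2 => if s (Fin.last n) = 0 then γ₀ * f (fun k => s k.castSucc)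
        else γ₁ * g (fun k => s k.castSucc))
      (fun i : Fin (n+1) => if h : (i:ℕ) < n then M ⟨i, h⟩ else ({pauliZ} : Set Obs)) := by
  obtain ⟨c, hc, o, ho, hno⟩ := hLC
  refine ⟨Fin.snoc c pauliZ, mem_ext hc, Fin.snoc o false, ?_, ?_⟩
  · rw [key _ _ _ _ _ (by simp)]
    simp only [Fin.snoc_last, Fin.snoc_castSucc, if_false, Bool.false_eq_true]
    exact mul_ne_zero (pow_ne_zero 2 (norm_ne_zero_iff.2 hγ)) (by simpa using ho)
  · rintro ⟨g', hg', hmatch⟩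
    apply hno
    refine ⟨fun i m => g' i.castSucc m, ?_, ?_⟩
    · intro d hd
      have hb : g' (Fin.last n) pauliZ = false := by
        simpa using hmatch (Fin.last n)
      have h2 := hg' (Fin.snoc d pauliZ) (mem_ext hd)
      rw [key _ _ _ _ _ (by simp)] at h2
      simp only [Fin.snoc_last, Fin.snoc_castSucc, hb, if_false, Bool.false_eq_true] at h2
      intro h0
      exact h2 (by rw [h0, mul_zero])
    · intro i
      simpa using hmatch i.castSucc

/-- Going Up Lemma I: if the `n`-qubit state `ψ` is logically contextual in scenario `M`,
then for any `n`-qubit state `θ` and `α ≠ 0`, `|α|² + |β|² = 1`, both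
`α ψ|0⟩ + β θ|1⟩` and `β θ|0⟩ + α ψ|1⟩` are logically contextual in the scenario that
extends `M` by giving party `n` the single observable Pauli Z. -/
theorem goingUpI (n : ℕ) (ψ θ : (Fin n → Fin 2) → ℂ)
    (hψ : ∑ s : Fin n → Fin 2, ‖ψ s‖ ^ 2 = 1)
    (hθ : ∑ s : Fin n → Fin 2, ‖θ s‖ ^ 2 = 1)
    (M : Fin n → Set Obs) (hMfin : ∀ i, (M i).Finite) (hMne : ∀ i, (M i).Nonempty)
    (hLC : LogicallyContextual ψ M)
    (α β : ℂ) (hα : α ≠ 0) (hnorm : ‖α‖ ^ 2 + ‖β‖ ^ 2 = 1) :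
    LogicallyContextual
      (fun s : Fin (n + 1) → Fin 2 =>
        if s (Fin.last n) = 0 then α * ψ (fun k : Fin n => s k.castSucc)
        else β * θ (fun k : Fin n => s k.castSucc))
      (fun i : Fin (n + 1) =>
        if h : (i : ℕ) < n then M ⟨i, h⟩ else ({pauliZ} : Set Obs)) ∧
    LogicallyContextual
      (fun s : Fin (n + 1) → Fin 2 =>
        if s (Fin.last n) = 0 then β * θ (fun k : Fin n => s k.castSucc)
        else α * ψ (fun k : Fin n => s k.castSucc))
      (fun i : Fin (n + 1) =>
        if h : (i : ℕ) < n then M ⟨i, h⟩ else ({pauliZ} : Set Obs)) := by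
  exact ⟨auxT ψ θ α β hα M hLC, auxF θ ψ β α hα M hLC⟩
end

section
/- (Going Up Lemma II.) Let ψ, φ be n-qubit states (unit vectors) and α, β ∈ ℂ, and suppose θ := α·ψ + β·φ is an n-qubit state that is logically contextual in some measurement scenario M. Let x, y ∈ ℂ be nonzero with |xα|² + |yβ|² = 1, and set N := √(|x|² + |y|²). For s : Fin (n+1) → Fin 2 write s' for the restriction of s to the first n coordinates, and define the (n+1)-qubit state ω by ω s = xα · ψ s' if s n = 0 and yβ · φ s' if s n = 1. Let B be the local observable with e_B⁺ = (conj y / N, conj x / N) and e_B⁻ = (x / N, −y / N). Then, in the measurement scenario that gives each party i < n its set M i and gives party n the single observable B, the state ω is logically contextual. -/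
open Complex Finset

lemma keyAmp (n : ℕ) (ψ φ : (Fin n → Fin 2) → ℂ) (α β x y : ℂ) (B : Obs)
    (hB1 : B.eplus =
      ![(starRingEnd ℂ) y / ((Real.sqrt (‖x‖ ^ 2 + ‖y‖ ^ 2) : ℝ) : ℂ),
        (starRingEnd ℂ) x / ((Real.sqrt (‖x‖ ^ 2 + ‖y‖ ^ 2) : ℝ) : ℂ)])
    (c : Fin n → Obs) (o : Fin n → Bool) :
    jointProb (fun s : Fin (n + 1) → Fin 2 =>
        if s (Fin.last n) = 0 then x * α * ψ (fun k : Fin n => s k.castSucc)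
        else y * β * φ (fun k : Fin n => s k.castSucc))
      (Fin.snoc c B) (Fin.snoc o true)
    = ‖x‖ ^ 2 * ‖y‖ ^ 2 / (‖x‖ ^ 2 + ‖y‖ ^ 2) *
        jointProb (fun s => α * ψ s + β * φ s) c o := by
  set N : ℝ := Real.sqrt (‖x‖ ^ 2 + ‖y‖ ^ 2) with hN
  unfold jointProb
  have hamp : (∑ s : Fin (n + 1) → Fin 2,
      (∏ i : Fin (n + 1),
        (starRingEnd ℂ) ((if (Fin.snoc o true : Fin (n+1) → Bool) i
          then ((Fin.snoc c B : Fin (n+1) → Obs) i).eplus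
          else ((Fin.snoc c B : Fin (n+1) → Obs) i).eminus) (s i))) *
        (if s (Fin.last n) = 0 then x * α * ψ (fun k : Fin n => s k.castSucc)
          else y * β * φ (fun k : Fin n => s k.castSucc)))
      = (x * y / (N : ℂ)) * ∑ s : Fin n → Fin 2,
          (∏ i : Fin n,
            (starRingEnd ℂ) ((if o i then (c i).eplus else (c i).eminus) (s i))) *
          (α * ψ s + β * φ s) := by
    rw [← Equiv.sum_comp (Fin.snocEquiv fun _ => Fin 2)]
    rw [Fintype.sum_prod_type]
    simp only [Fin.snocEquiv_apply, Fin.prod_univ_castSucc, Fin.snoc_castSucc, Fin.snoc_last]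
    rw [Fin.sum_univ_two]
    simp only [show ((0 : Fin 2) = 0) = True by simp, show ((1 : Fin 2) = 0) = False by decide,
      if_true, if_false, if_pos trivial]
    rw [← Finset.sum_add_distrib, Finset.mul_sum]
    refine Finset.sum_congr rfl fun s _ => ?_
    simp only [hB1, Matrix.cons_val_zero, Matrix.cons_val_one, Matrix.head_cons, map_div₀,
      Complex.conj_conj, Complex.conj_ofReal]
    ring
  rw [hamp, norm_mul, mul_pow]
  congr 1
  rw [norm_div, norm_mul, Complex.norm_real, Real.norm_eq_abs,
    _root_.abs_of_nonneg (Real.sqrt_nonneg _), div_pow, mul_pow,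
    Real.sq_sqrt (by positivity)]

/-- Going Up Lemma II: if `θ = α ψ + β φ` is a logically contextual `n`-qubit state in
scenario `M`, and `x, y` are nonzero with `|xα|² + |yβ|² = 1`, then
`ω = xα ψ|0⟩ + yβ φ|1⟩` is logically contextual in the scenario extending `M` by giving
party `n` the single observable `B` with `e_B⁺ = (conj y, conj x)/N`,
`e_B⁻ = (x, -y)/N`, `N = √(|x|² + |y|²)`. -/
theorem goingUpII (n : ℕ) (ψ φ : (Fin n → Fin 2) → ℂ)
    (hψ : ∑ s : Fin n → Fin 2, ‖ψ s‖ ^ 2 = 1)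
    (hφ : ∑ s : Fin n → Fin 2, ‖φ s‖ ^ 2 = 1)
    (α β : ℂ)
    (hθstate : ∑ s : Fin n → Fin 2, ‖α * ψ s + β * φ s‖ ^ 2 = 1)
    (M : Fin n → Set Obs) (hMfin : ∀ i, (M i).Finite) (hMne : ∀ i, (M i).Nonempty)
    (hLC : LogicallyContextual (fun s => α * ψ s + β * φ s) M)
    (x y : ℂ) (hx : x ≠ 0) (hy : y ≠ 0)
    (hnorm : ‖x * α‖ ^ 2 + ‖y * β‖ ^ 2 = 1)
    (B : Obs)
    (hB1 : B.eplus =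
      ![(starRingEnd ℂ) y / ((Real.sqrt (‖x‖ ^ 2 + ‖y‖ ^ 2) : ℝ) : ℂ),
        (starRingEnd ℂ) x / ((Real.sqrt (‖x‖ ^ 2 + ‖y‖ ^ 2) : ℝ) : ℂ)])
    (hB2 : B.eminus =
      ![x / ((Real.sqrt (‖x‖ ^ 2 + ‖y‖ ^ 2) : ℝ) : ℂ),
        -y / ((Real.sqrt (‖x‖ ^ 2 + ‖y‖ ^ 2) : ℝ) : ℂ)]) :
    LogicallyContextual
      (fun s : Fin (n + 1) → Fin 2 =>
        if s (Fin.last n) = 0 then x * α * ψ (fun k : Fin n => s k.castSucc)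
        else y * β * φ (fun k : Fin n => s k.castSucc))
      (fun i : Fin (n + 1) =>
        if h : (i : ℕ) < n then M ⟨i, h⟩ else ({B} : Set Obs)) := by
  obtain ⟨c, hc, o, ho, hng⟩ := hLC
  have hkpos : (0:ℝ) < ‖x‖ ^ 2 * ‖y‖ ^ 2 / (‖x‖ ^ 2 + ‖y‖ ^ 2) := by
    have hx' : 0 < ‖x‖ := norm_pos_iff.mpr hx
    have hy' : 0 < ‖y‖ := norm_pos_iff.mpr hy
    positivity
  have hmem : ∀ (d : Fin n → Obs), (∀ i, d i ∈ M i) →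
      ∀ i : Fin (n+1), (Fin.snoc d B : Fin (n+1) → Obs) i ∈
        (if h : (i : ℕ) < n then M ⟨i, h⟩ else ({B} : Set Obs)) := by
    intro d hd i
    refine Fin.lastCases ?_ ?_ i
    · rw [dif_neg (by simp)]
      simp [Fin.snoc_last]
    · intro j
      simp only [Fin.coe_castSucc, j.isLt, dif_pos, Fin.eta, Fin.snoc_castSucc]
      exact hd j
  refine ⟨Fin.snoc c B, hmem c hc, Fin.snoc o true, ?_, ?_⟩
  · rw [keyAmp n ψ φ α β x y B hB1 c o]
    exact mul_ne_zero hkpos.ne' ho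
  · rintro ⟨g', hg'c, hg'm⟩
    have hlast : g' (Fin.last n) B = true := by
      have := hg'm (Fin.last n)
      simpa [Fin.snoc_last] using this
    refine hng ⟨fun i m => g' i.castSucc m, ?_, ?_⟩
    · intro d hd
      have h1 := hg'c (Fin.snoc d B) (hmem d hd)
      have hout : (fun i => g' i ((Fin.snoc d B : Fin (n+1) → Obs) i)) =
          Fin.snoc (fun i => g' i.castSucc (d i)) true := by
        funext i
        refine Fin.lastCases ?_ ?_ i
        · simp [Fin.snoc_last, hlast]
        · intro j; simp [Fin.snoc_castSucc]
      rw [hout, keyAmp n ψ φ α β x y B hB1 d (fun i => g' i.castSucc (d i))] at h1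
      exact fun h0 => h1 (by rw [h0, mul_zero])
    · intro i
      have := hg'm i.castSucc
      simpa [Fin.snoc_castSucc] using this
end

section
/- Let H and K be finite-dimensional complex inner product spaces and let φ be an element of the tensor product H ⊗[ℂ] K. Let η ∈ H and θ ∈ K be nonzero. For x ∈ H let Lₓ : H ⊗ K → K be the linear map determined on pure tensors by h ⊗ k ↦ ⟪x, h⟫ • k, and for y ∈ K let Rᵧ : H ⊗ K → H be the linear map determined by h ⊗ k ↦ ⟪y, k⟫ • h. If Lₓ φ = 0 for every x ∈ H orthogonal to η, and Rᵧ φ = 0 for every y ∈ K orthogonal to θ, then there exists a scalar c ∈ ℂ with φ = c • (η ⊗ₜ θ). -/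
open scoped InnerProductSpace TensorProduct

open TensorProduct in
lemma tensor_sum_repr {H K : Type*}
    [NormedAddCommGroup H] [InnerProductSpace ℂ H]
    [NormedAddCommGroup K] [InnerProductSpace ℂ K]
    {ι : Type*} [Fintype ι] (b : OrthonormalBasis ι ℂ H)
    (φ : TensorProduct ℂ H K) :
    φ = ∑ i, b i ⊗ₜ[ℂ]
      (TensorProduct.lift ((LinearMap.lsmul ℂ K).comp (innerSL ℂ (b i)).toLinearMap) φ) := by
  have : (LinearMap.id : H ⊗[ℂ] K →ₗ[ℂ] H ⊗[ℂ] K) =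
      ∑ i, (TensorProduct.mk ℂ H K (b i)).comp
        (TensorProduct.lift ((LinearMap.lsmul ℂ K).comp (innerSL ℂ (b i)).toLinearMap)) := by
    apply TensorProduct.ext'
    intro h k
    simp only [LinearMap.id_apply, LinearMap.sum_apply, LinearMap.comp_apply,
      TensorProduct.lift.tmul, LinearMap.comp_apply, LinearMap.lsmul_apply,
      ContinuousLinearMap.coe_coe, innerSL_apply_apply, TensorProduct.mk_apply]
    simp_rw [← TensorProduct.smul_tmul, ← TensorProduct.sum_tmul, b.sum_repr' h]
  calc φ = LinearMap.id φ := rfl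
    _ = _ := by rw [this]; simp [TensorProduct.mk_apply]


/-- Partial inner product lemma: if all contractions of `φ ∈ H ⊗ K` against vectors
orthogonal to `η` in the first factor and against vectors orthogonal to `θ` in the
second factor vanish, then `φ` is a scalar multiple of `η ⊗ θ`.
Here the contraction against `x : H` is the linear map `H ⊗ K →ₗ K` determined on pure
tensors by `h ⊗ k ↦ ⟪x, h⟫ • k`, and similarly for the second factor. -/
theorem partial_inner_product_lemma {H K : Type*}
    [NormedAddCommGroup H] [InnerProductSpace ℂ H] [FiniteDimensional ℂ H]
    [NormedAddCommGroup K] [InnerProductSpace ℂ K] [FiniteDimensional ℂ K]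
    (φ : TensorProduct ℂ H K) (η : H) (θ : K) (hη : η ≠ 0) (hθ : θ ≠ 0)
    (hL : ∀ x : H, ⟪x, η⟫_ℂ = 0 →
      TensorProduct.lift ((LinearMap.lsmul ℂ K).comp (innerSL ℂ x).toLinearMap) φ = 0)
    (hR : ∀ y : K, ⟪y, θ⟫_ℂ = 0 →
      TensorProduct.lift
        (((LinearMap.lsmul ℂ H).comp (innerSL ℂ y).toLinearMap).flip) φ = 0) :
    ∃ c : ℂ, φ = c • (η ⊗ₜ[ℂ] θ) := by
  classical
  set e₀ : H := (‖η‖ : ℂ)⁻¹ • η with he₀def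
  have hnorm : ‖η‖ ≠ 0 := norm_ne_zero_iff.mpr hη
  have he₀norm : ‖e₀‖ = 1 := by
    rw [he₀def, norm_smul]
    simp [hnorm]
  have hon : Orthonormal ℂ (Subtype.val : ({e₀} : Set H) → H) := by
    apply orthonormal_subtype_iff_ite.mpr
    intro v hv w hw
    simp only [Set.mem_singleton_iff] at hv hw
    subst hv; subst hw
    simp [inner_self_eq_norm_sq_to_K, he₀norm]
  obtain ⟨u, b, hsub, hb⟩ := hon.exists_orthonormalBasis_extension
  have he₀u : e₀ ∈ u := hsub rfl
  have hηe₀ : η = (‖η‖ : ℂ) • e₀ := by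
    rw [he₀def, smul_smul, mul_inv_cancel₀ (by exact_mod_cast hnorm), one_smul]
  -- expansion
  have hrep := tensor_sum_repr b φ
  have hzero : ∀ i : u, (i : H) ≠ e₀ →
      TensorProduct.lift ((LinearMap.lsmul ℂ K).comp (innerSL ℂ (b i)).toLinearMap) φ = 0 := by
    intro i hi
    apply hL
    rw [hηe₀, inner_smul_right]
    have : ⟪b i, b ⟨e₀, he₀u⟩⟫_ℂ = 0 := by
      apply b.orthonormal.2
      intro h
      apply hi
      have := congrArg (fun j => (b j : H)) h
      simp only [hb] at this
      exact this
    rw [hb] at this ⊢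
    simp only [this, mul_zero]
  set k : K := TensorProduct.lift
      ((LinearMap.lsmul ℂ K).comp (innerSL ℂ (b ⟨e₀, he₀u⟩)).toLinearMap) φ with hk
  have hφ : φ = e₀ ⊗ₜ[ℂ] k := by
    rw [hrep, Finset.sum_eq_single (⟨e₀, he₀u⟩ : u)]
    · simp [hk, hb]
    · intro i _ hi
      rw [hzero i (by simpa [hb] using fun h => hi (Subtype.ext h)), TensorProduct.tmul_zero]
    · simp
  -- now use hR
  have hkθ : ∀ y : K, ⟪y, θ⟫_ℂ = 0 → ⟪y, k⟫_ℂ = 0 := by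
    intro y hy
    have := hR y hy
    rw [hφ] at this
    simp only [TensorProduct.lift.tmul, LinearMap.flip_apply, LinearMap.comp_apply,
      ContinuousLinearMap.coe_coe, innerSL_apply_apply, LinearMap.lsmul_apply] at this
    have he₀ne : e₀ ≠ 0 := by
      intro h; rw [h, norm_zero] at he₀norm; norm_num at he₀norm
    rcases smul_eq_zero.mp this with h | h
    · exact h
    · exact absurd h he₀ne
  have hkmem : k ∈ (ℂ ∙ θ) := by
    rw [← (ℂ ∙ θ).orthogonal_orthogonal, Submodule.mem_orthogonal]
    intro y hy
    have h1 : ⟪θ, y⟫_ℂ = 0 :=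
      (Submodule.mem_orthogonal _ y).mp hy θ (Submodule.mem_span_singleton_self θ)
    have h2 : ⟪y, θ⟫_ℂ = 0 := by rw [← inner_conj_symm, h1, map_zero]
    exact hkθ y h2
  obtain ⟨d, hd⟩ := Submodule.mem_span_singleton.mp hkmem
  refine ⟨d * (‖η‖ : ℂ)⁻¹, ?_⟩
  rw [hφ, ← hd, he₀def, TensorProduct.smul_tmul', TensorProduct.tmul_smul, ← TensorProduct.smul_tmul', smul_smul]
  exact (TensorProduct.smul_tmul' _ _ _).symm
end

section
/- Let n ≥ 1 and let ρ : Matrix (Fin n) (Fin n) ℂ be a density matrix, i.e. ρ is Hermitian (ρᴴ = ρ), positive semidefinite, and has trace 1; let λ : Fin n → ℝ be its eigenvalues (Matrix.IsHermitian.eigenvalues). Then: (i) for every unitary matrix U ∈ Matrix.unitaryGroup (Fin n) ℂ, ∑ i, Real.negMulLog (Re ((U * ρ * Uᴴ) i i)) ≥ ∑ i, Real.negMulLog (λ i); and (ii) there exists a unitary U for which equality holds. Consequently, the minimum over all unitaries U of the Shannon entropy of the diagonal of U ρ Uᴴ equals the von Neumann entropy of ρ. -/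
open Matrix
open scoped ComplexOrder

/-!
Write `ρ = W diag(λ) Wᴴ` with `W` unitary. For any unitary `U`, the diagonal of `U ρ Uᴴ` is
`S λ`, where `S i j = |(U W) i j|²` is doubly stochastic because the rows and columns of `U W`
are unit vectors. Jensen's inequality for the concave function `negMulLog` on each row of `S`,
summed using the column sums of `S`, gives `∑ negMulLog λ ≤ ∑ negMulLog (S λ)`. For `U = Wᴴ`
the matrix `S` is the identity.
-/

theorem ConcaveOn.sum_le_sum_comp_mulVec_of_mem_doublyStochastic {n : Type*} [Fintype n]
    [DecidableEq n] {s : Set ℝ} {f : ℝ → ℝ} (hf : ConcaveOn ℝ s f) {M : Matrix n n ℝ}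
    (hM : M ∈ doublyStochastic ℝ n) {x : n → ℝ} (hx : ∀ j, x j ∈ s) :
    ∑ j, f (x j) ≤ ∑ i, f ((M *ᵥ x) i) := by
  have jensen (i : n) : ∑ j, M i j * f (x j) ≤ f ((M *ᵥ x) i) := by
    simpa [mulVec, dotProduct] using hf.le_map_sum (t := Finset.univ) (w := M i) (p := x)
      (fun j _ => nonneg_of_mem_doublyStochastic hM) (sum_row_of_mem_doublyStochastic hM i)
      (fun j _ => hx j)
  calc ∑ j, f (x j) = ∑ j, (∑ i, M i j) * f (x j) := by
        simp [sum_col_of_mem_doublyStochastic hM]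
    _ = ∑ i, ∑ j, M i j * f (x j) := by
        simp_rw [Finset.sum_mul]
        exact Finset.sum_comm
    _ ≤ ∑ i, f ((M *ᵥ x) i) := Finset.sum_le_sum fun i _ => jensen i

namespace Matrix

variable {n 𝕜 : Type*} [Fintype n] [DecidableEq n] [RCLike 𝕜]

theorem of_norm_sq_mem_doublyStochastic {U : Matrix n n 𝕜} (hU : U ∈ unitaryGroup n 𝕜) :
    (of fun i j => ‖U i j‖ ^ 2) ∈ doublyStochastic ℝ n := by
  have hrow (i : n) : ∑ j, ‖U i j‖ ^ 2 = 1 := by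
    have h := congrFun (congrFun (mem_unitaryGroup_iff.mp hU) i) i
    simp only [mul_apply, star_apply, one_apply_eq, RCLike.star_def, RCLike.mul_conj] at h
    exact_mod_cast h
  have hcol (j : n) : ∑ i, ‖U i j‖ ^ 2 = 1 := by
    have h := congrFun (congrFun (mem_unitaryGroup_iff'.mp hU) j) j
    simp only [mul_apply, star_apply, one_apply_eq, RCLike.star_def, RCLike.conj_mul] at h
    exact_mod_cast h
  exact mem_doublyStochastic_iff_sum.mpr
    ⟨fun _ _ => by simp only [of_apply]; positivity, hrow, hcol⟩

theorem mul_diagonal_mul_conjTranspose_apply_self (U : Matrix n n 𝕜) (d : n → ℝ) (i : n) :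
    (U * diagonal (RCLike.ofReal ∘ d : n → 𝕜) * Uᴴ) i i =
      (((of fun i j => ‖U i j‖ ^ 2) *ᵥ d) i : 𝕜) := by
  rw [mul_apply]
  simp only [mul_diagonal, conjTranspose_apply, RCLike.star_def, mulVec, dotProduct,
    of_apply, Function.comp_apply, RCLike.ofReal_sum, RCLike.ofReal_mul, RCLike.ofReal_pow]
  refine Finset.sum_congr rfl fun j _ => ?_
  rw [mul_right_comm, RCLike.mul_conj]

theorem IsHermitian.conj_eq_conj_diagonal_eigenvalues {A : Matrix n n 𝕜} (hA : A.IsHermitian)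
    (U : Matrix n n 𝕜) :
    U * A * Uᴴ = (U * (hA.eigenvectorUnitary : Matrix n n 𝕜)) *
      diagonal (RCLike.ofReal ∘ hA.eigenvalues) *
      (U * (hA.eigenvectorUnitary : Matrix n n 𝕜))ᴴ := by
  conv_lhs => rw [hA.spectral_theorem, Unitary.conjStarAlgAut_apply]
  simp only [star_eq_conjTranspose, conjTranspose_mul, Matrix.mul_assoc]

end Matrix

theorem diag_entropy_ge_vonNeumann_general {n : ℕ}
    (ρ : Matrix (Fin n) (Fin n) ℂ) (hHerm : ρ.IsHermitian) (hpos : ρ.PosSemidef) :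
    (∀ U ∈ Matrix.unitaryGroup (Fin n) ℂ,
      ∑ i, Real.negMulLog (((U * ρ * Uᴴ) i i).re) ≥
        ∑ i, Real.negMulLog (hHerm.eigenvalues i)) ∧
    (∃ U ∈ Matrix.unitaryGroup (Fin n) ℂ,
      ∑ i, Real.negMulLog (((U * ρ * Uᴴ) i i).re) =
        ∑ i, Real.negMulLog (hHerm.eigenvalues i)) := by
  have hW := hHerm.eigenvectorUnitary.2
  refine ⟨fun U hU => ?_, ⟨star hHerm.eigenvectorUnitary, Unitary.star_mem hW, ?_⟩⟩
  · simp only [hHerm.conj_eq_conj_diagonal_eigenvalues, mul_diagonal_mul_conjTranspose_apply_self]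
    exact Real.concaveOn_negMulLog.sum_le_sum_comp_mulVec_of_mem_doublyStochastic
      (of_norm_sq_mem_doublyStochastic (mul_mem hU hW)) hpos.eigenvalues_nonneg
  · simp [hHerm.conj_eq_conj_diagonal_eigenvalues]

/-- For a density matrix `ρ`, the Shannon entropy of the diagonal of `U ρ Uᴴ` is at
least the Shannon entropy of the eigenvalues (the von Neumann entropy) for every
unitary `U`, and equality is attained for some unitary `U`.  Hence the minimum over
unitaries of the diagonal Shannon entropy is the von Neumann entropy of `ρ`. -/
theorem diag_entropy_ge_vonNeumann {n : ℕ} (hn : 1 ≤ n)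
    (ρ : Matrix (Fin n) (Fin n) ℂ) (hHerm : ρ.IsHermitian) (hpos : ρ.PosSemidef)
    (htr : ρ.trace = 1) :
    (∀ U ∈ Matrix.unitaryGroup (Fin n) ℂ,
      ∑ i, Real.negMulLog (((U * ρ * Uᴴ) i i).re) ≥
        ∑ i, Real.negMulLog (hHerm.eigenvalues i)) ∧
    (∃ U ∈ Matrix.unitaryGroup (Fin n) ℂ,
      ∑ i, Real.negMulLog (((U * ρ * Uᴴ) i i).re) =
        ∑ i, Real.negMulLog (hHerm.eigenvalues i)) :=
  diag_entropy_ge_vonNeumann_general ρ hHerm hpos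
end
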